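/- (Lemma 2, second part.) Under the construction setup, any two Golay complementary sets belonging to different CCCs have a zero cross-correlation zone of width 2^{m−s}: for all 0 ≤ t_1 ≠ t_1' ≤ 2^s−1 and all 0 ≤ t_2, t_2' ≤ 2^{k+1}−1, one has Σ_{ν=0}^{2^{k+1}−1} γ(s^{(t_1,t_2)}_ν, s^{(t_1',t_2')}_ν)(u) = 0 for all shifts |u| < 2^{m−s}, where s^{(t_1,t_2)}_ν (0 ≤ ν ≤ 2^{k+1}−1) denote the sequences of S^{(t_1,t_2)} (indexed by (d,d_0,…,d_{k−1})). -/

import Mathlib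

/-- Aperiodic cross-correlation function (ACCF) of two complex sequences of length `L`,
for an integer shift `u` with `−L < u ≤ L`:
`γ(a,b)(u) = Σ_{i=0}^{L−1−u} a_i · conj(b_{i+u})` for `0 ≤ u`, and
`γ(a,b)(u) = Σ_{i=0}^{L+u−1} a_{i−u} · conj(b_i)` for `u < 0`. -/
noncomputable def accf (L : ℕ) (a b : ℕ → ℂ) (u : ℤ) : ℂ :=
  if 0 ≤ u then ∑ i ∈ Finset.range (L - u.toNat), a i * (starRingEnd ℂ) (b (i + u.toNat))
  else ∑ i ∈ Finset.range (L - (-u).toNat), a (i + (-u).toNat) * (starRingEnd ℂ) (b i)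

/-- ACCF for a nonnegative shift `u : ℕ`. -/
noncomputable def accfN (L : ℕ) (a b : ℕ → ℂ) (u : ℕ) : ℂ :=
  ∑ i ∈ Finset.range (L - u), a i * (starRingEnd ℂ) (b (i + u))

/-- Periodic cross-correlation function of two sequences of length `N`. -/
noncomputable def pccf (N : ℕ) (x y : ℕ → ℂ) (u : ℕ) : ℂ :=
  ∑ n ∈ Finset.range N, x n * (starRingEnd ℂ) (y ((n + u) % N))

/-- The `t`-th bit of `x`, as an element of `ZMod q`. -/
def bitc (q : ℕ) (x t : ℕ) : ZMod q := if x.testBit t then 1 else 0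

/-- The `t`-th bit of `x`, as a natural number. -/
def bitn (x t : ℕ) : ℕ := if x.testBit t then 1 else 0

/-- `ω = exp(2π√−1/q)`. -/
noncomputable def omegaQ (q : ℕ) : ℂ := Complex.exp (2 * Real.pi * Complex.I / (q : ℂ))

/-- The construction setup of Lemma 2/Theorem 1: integers `0 ≤ s ≤ k ≤ m−2`, an even
integer `q ≥ 2`, index sets `J = {j_0,…,j_{k−1−s}} ⊆ {0,…,m−s−1}` and
`I = {i_0,…,i_{m−k−1}} = {0,…,m−s−1} \ J`, a permutation `π` of `{0,…,m−k−1}`,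
and a GBF `f : {0,1}^m → ℤ_q` (written as a function of the index `x < 2^m`) all of whose
restrictions over the variables `x_{j_0},…,x_{j_{k−s−1}}` are of the prescribed
path-plus-isolated-vertices quadratic form. -/
structure ZCZSetup where
  /-- the (even) alphabet size -/
  q : ℕ
  hq : 2 ≤ q
  hqeven : Even q
  m : ℕ
  k : ℕ
  s : ℕ
  hsk : s ≤ k
  hkm : k + 2 ≤ m
  /-- `jv β = j_β` for `β < k − s` (the non-forced part of `J`) -/
  jv : ℕ → ℕ
  /-- `iv β = i_β` for `β < m − k` (an enumeration of `I`) -/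
  iv : ℕ → ℕ
  /-- the permutation `π` of `{0,…,m−k−1}` -/
  perm : ℕ → ℕ
  hperm : Set.BijOn perm (Set.Iio (m - k)) (Set.Iio (m - k))
  hjv_lt : ∀ β < k - s, jv β < m - s
  hjv_inj : ∀ β₁ < k - s, ∀ β₂ < k - s, jv β₁ = jv β₂ → β₁ = β₂
  hiv_lt : ∀ β < m - k, iv β < m - s
  hiv_inj : ∀ β₁ < m - k, ∀ β₂ < m - k, iv β₁ = iv β₂ → β₁ = β₂
  hdisj : ∀ β₁ < k - s, ∀ β₂ < m - k, jv β₁ ≠ iv β₂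
  /-- the GBF `f`, as a function of the index `x` (with `j`-th bit `x_j`) -/
  f : ℕ → ZMod q
  hf : ∀ e : ℕ → Bool, ∃ u : ℕ → ZMod q, ∃ v' : ℕ → ZMod q, ∃ v : ZMod q,
    ∀ x < 2 ^ m, (∀ β < k - s, x.testBit (jv β) = e β) →
      f x = ((q / 2 : ℕ) : ZMod q) * (∑ β ∈ Finset.range (m - k - 1),
              bitc q x (iv (perm β)) * bitc q x (iv (perm (β + 1))))
          + (∑ β ∈ Finset.range (m - k), u β * bitc q x (iv β))
          + (∑ β ∈ Finset.range s, v' β * bitc q x (m - s + β)) + v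

namespace ZCZSetup

variable (C : ZCZSetup)

/-- The full tuple `(j_0,…,j_{k−1})`: `j_β = jv β` for `β < k − s` and
`j_{k−s+β} = m − s + β` for `0 ≤ β < s`. -/
def jfull (β : ℕ) : ℕ :=
  if β < C.k - C.s then C.jv β else C.m - C.s + (β - (C.k - C.s))

/-- The bits `b_0,…,b_{k+s+1}`: `t_2 = Σ_{β=0}^{k} b_β 2^β` and
`t_1 = Σ_{β=0}^{s−1} b_{k+1+β} 2^β`. -/
def bbit (t1 t2 β : ℕ) : ℕ :=
  if β < C.k + 1 then bitn t2 β else bitn t1 (β - (C.k + 1))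

/-- `γ_1 = i_{π(0)}`, an end vertex of the path. -/
def gamma1 : ℕ := C.iv (C.perm 0)

/-- `γ_2 = i_{π(m−k−1)}`, the other end vertex of the path. -/
def gamma2 : ℕ := C.iv (C.perm (C.m - C.k - 1))

/-- The GBF (as a function of the index `x`) of the `ν`-th sequence of `S^{(t_1,t_2)}`,
where `ν = d·2^k + Σ_{β=0}^{k−1} d_β 2^β` encodes `(d, d_0,…,d_{k−1})`. -/
def gExp (t1 t2 ν x : ℕ) : ZMod C.q :=
  C.f x + ((C.q / 2 : ℕ) : ZMod C.q) *
    ((∑ β ∈ Finset.range C.k, bitc C.q ν β * bitc C.q x (C.jfull β))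
     + bitc C.q ν C.k * bitc C.q x C.gamma1
     + (∑ β ∈ Finset.range C.k, ((C.bbit t1 t2 β : ℕ) : ZMod C.q) * bitc C.q x (C.jfull β))
     + (∑ β ∈ Finset.Ico (C.k - C.s) C.k,
          bitc C.q ν β * ((C.bbit t1 t2 (C.s + 1 + β) : ℕ) : ZMod C.q))
     + ((C.bbit t1 t2 C.k : ℕ) : ZMod C.q) * bitc C.q x C.gamma2)

/-- The `ν`-th sequence `s^{(t_1,t_2)}_ν` of `S^{(t_1,t_2)}` (a complex sequence of
length `2^m`). -/
noncomputable def Sseq (t1 t2 ν : ℕ) : ℕ → ℂ :=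
  fun x => omegaQ C.q ^ (C.gExp t1 t2 ν x).val

end ZCZSetup

/-!
Write `ψ` for the additive character `a ↦ ω^a` of `ℤ_q` and `h = q/2`. Since `ν` runs over all
bit patterns `(d_0, …, d_{k-1}, d)`, the sum over `ν` of `s_ν(x) · conj (s'_ν(y))` factors as
`ψ(c₀) ∏_β (1 + ψ(h c_β))`. A factor vanishes when `x` and `y` differ at some `x_{j_β}`
(`β < k - s`) or at `γ₁`, and, when `y = x`, at a bit where `t₁` and `t₁'` differ.

For `0 < w < 2^{m-s}` and `y = x + w` agreeing at those coordinates, `x` and `y` must differ at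
some vertex of the path, say first at `i_{π(β₀)}`, with `β₀ > 0` because `γ₁ = i_{π(0)}`.
Flipping the bit `i_{π(β₀-1)}` of `x` (which flips the same bit of `x + w`) is an involution, and
it changes the sign of every term through the single edge `h x_{i_{π(β₀-1)}} x_{i_{π(β₀)}}` of the
path. Negative shifts follow by conjugate symmetry.
-/

open Finset

section Character

variable {q : ℕ}

theorem neg_half (hq : Even q) : -((q / 2 : ℕ) : ZMod q) = ((q / 2 : ℕ) : ZMod q) := by
  obtain ⟨n, rfl⟩ := hq
  rw [neg_eq_iff_add_eq_zero, ← Nat.cast_add, show (n + n) / 2 + (n + n) / 2 = n + n by omega,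
    ZMod.natCast_self]

theorem half_mul_eq_half (hq : Even q) {c : ZMod q} (hc : c = 1 ∨ c = -1) :
    ((q / 2 : ℕ) : ZMod q) * c = ((q / 2 : ℕ) : ZMod q) := by
  rcases hc with rfl | rfl
  · exact mul_one _
  · rw [mul_neg_one, neg_half hq]

variable [NeZero q]

theorem omegaQ_pow_val (a : ZMod q) : omegaQ q ^ a.val = ZMod.stdAddChar a := by
  conv_rhs => rw [← ZMod.natCast_zmod_val a, ← Int.cast_natCast, ZMod.stdAddChar_coe]
  rw [omegaQ, ← Complex.exp_nat_mul]
  congr 1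
  push_cast
  ring

theorem stdAddChar_half (hq : Even q) : ZMod.stdAddChar ((q / 2 : ℕ) : ZMod q) = -1 := by
  obtain ⟨n, rfl⟩ := hq
  have hn : (n : ℂ) ≠ 0 := by have := NeZero.ne (n + n); norm_cast; omega
  rw [← Int.cast_natCast, ZMod.stdAddChar_coe, show (n + n) / 2 = n by omega,
    ← Complex.exp_pi_mul_I]
  congr 1
  push_cast
  field_simp
  ring

theorem stdAddChar_add_half (hq : Even q) (a : ZMod q) :
    ZMod.stdAddChar (a + ((q / 2 : ℕ) : ZMod q)) = -ZMod.stdAddChar a := by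
  rw [AddChar.map_add_eq_mul, stdAddChar_half hq, mul_neg_one]

end Character

theorem natCast_bitn (q x t : ℕ) : ((bitn x t : ℕ) : ZMod q) = bitc q x t := by
  unfold bitn bitc
  split_ifs <;> simp

theorem bitc_sub_bitc_of_testBit_ne {q x y t : ℕ} (h : x.testBit t ≠ y.testBit t) :
    bitc q x t - bitc q y t = 1 ∨ bitc q x t - bitc q y t = -1 := by
  unfold bitc
  cases hx : x.testBit t <;> cases hy : y.testBit t <;> simp_all

theorem testBit_xor_two_pow_eq_iff (x y p t : ℕ) :
    (x ^^^ 2 ^ p).testBit t = (y ^^^ 2 ^ p).testBit t ↔ x.testBit t = y.testBit t := by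
  simp [Nat.testBit_xor]

theorem bitc_xor_two_pow_of_ne {q x p t : ℕ} (h : p ≠ t) :
    bitc q (x ^^^ 2 ^ p) t = bitc q x t := by
  simp [bitc, Nat.testBit_xor, h]

theorem bitc_xor_two_pow_sub_comm {q x y p : ℕ} (hxy : x.testBit p = y.testBit p) (t : ℕ) :
    bitc q (x ^^^ 2 ^ p) t - bitc q x t = bitc q (y ^^^ 2 ^ p) t - bitc q y t := by
  by_cases h : p = t
  · subst h
    simp [bitc, hxy]
  · simp [bitc_xor_two_pow_of_ne h]

theorem xor_two_pow_eq_add {x p : ℕ} (h : x.testBit p = false) : x ^^^ 2 ^ p = x + 2 ^ p := by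
  have hr : x % 2 ^ (p + 1) < 2 ^ p := by
    by_contra hle
    have := Nat.testBit_of_two_pow_le_and_two_pow_add_one_gt (not_lt.mp hle)
      (Nat.mod_lt _ (Nat.two_pow_pos _))
    simp_all [Nat.testBit_mod_two_pow]
  have hr' : 2 ^ p + x % 2 ^ (p + 1) < 2 ^ (p + 1) := by
    have : 2 ^ (p + 1) = 2 * 2 ^ p := by ring
    omega
  conv_lhs => rw [← Nat.div_add_mod x (2 ^ (p + 1))]
  rw [show x + 2 ^ p = 2 ^ (p + 1) * (x / 2 ^ (p + 1)) + (2 ^ p + x % 2 ^ (p + 1)) by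
    have := Nat.div_add_mod x (2 ^ (p + 1)); omega]
  apply Nat.eq_of_testBit_eq
  intro j
  rw [Nat.testBit_xor, Nat.testBit_two_pow_mul_add _ hr', Nat.testBit_two_pow_mul_add _
    (Nat.mod_lt _ (Nat.two_pow_pos _)), Nat.testBit_two_pow]
  rcases lt_trichotomy j p with hj | rfl | hj
  · simp [Nat.lt_succ_of_lt hj, Nat.testBit_two_pow_add_gt hj, hj.ne']
  · simp [Nat.testBit_two_pow_add_eq, Nat.testBit_mod_two_pow, h]
  · simp [show ¬ j < p + 1 by omega, hj.ne]

theorem xor_two_pow_add_comm {x w p : ℕ} (h : x.testBit p = (x + w).testBit p) :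
    (x ^^^ 2 ^ p) + w = (x + w) ^^^ 2 ^ p := by
  cases hx : x.testBit p
  · rw [xor_two_pow_eq_add hx, xor_two_pow_eq_add (h ▸ hx)]
    omega
  · have hx' : (x ^^^ 2 ^ p).testBit p = false := by simp [hx]
    have hy' : ((x + w) ^^^ 2 ^ p).testBit p = false := by
      simp [← h, hx]
    have e₁ := xor_two_pow_eq_add hx'
    have e₂ := xor_two_pow_eq_add hy'
    rw [Nat.xor_assoc, Nat.xor_self, Nat.xor_zero] at e₁ e₂
    omega

theorem eq_zero_of_testBit_add_eq {x w n : ℕ} (hw : w < 2 ^ n)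
    (h : ∀ i < n, (x + w).testBit i = x.testBit i) : w = 0 := by
  have hmod : x + w ≡ x + 0 [MOD 2 ^ n] := by
    apply Nat.eq_of_testBit_eq
    intro i
    by_cases hi : i < n
    · simp [Nat.testBit_mod_two_pow, hi, h i hi]
    · simp [Nat.testBit_mod_two_pow, hi]
  have := Nat.ModEq.add_left_cancel' x hmod
  rwa [Nat.ModEq, Nat.zero_mod, Nat.mod_eq_of_lt hw] at this

theorem sum_range_two_pow_addChar_bitc {q : ℕ} {R : Type*} [CommRing R]
    (ψ : AddChar (ZMod q) R) (c : ℕ → ZMod q) (n : ℕ) (c₀ : ZMod q) :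
    ∑ ν ∈ range (2 ^ n), ψ (c₀ + ∑ β ∈ range n, bitc q ν β * c β)
      = ψ c₀ * ∏ β ∈ range n, (1 + ψ (c β)) := by
  induction n generalizing c₀ with
  | zero => simp [bitc]
  | succ n ih =>
    have low : ∀ ν ∈ range (2 ^ n), ψ (c₀ + ∑ β ∈ range (n + 1), bitc q ν β * c β)
        = ψ (c₀ + ∑ β ∈ range n, bitc q ν β * c β) := fun ν hν => by
      rw [sum_range_succ, bitc, Nat.testBit_lt_two_pow (mem_range.mp hν)]
      simp
    have high : ∀ ν ∈ range (2 ^ n), ψ (c₀ + ∑ β ∈ range (n + 1), bitc q (2 ^ n + ν) β * c β)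
        = ψ ((c₀ + c n) + ∑ β ∈ range n, bitc q ν β * c β) := fun ν hν => by
      have hlow : ∀ β ∈ range n, bitc q (2 ^ n + ν) β * c β = bitc q ν β * c β := fun β hβ => by
        simp only [bitc, Nat.testBit_two_pow_add_gt (mem_range.mp hβ)]
      rw [sum_range_succ, sum_congr rfl hlow, bitc, Nat.testBit_two_pow_add_eq,
        Nat.testBit_lt_two_pow (mem_range.mp hν)]
      simp only [Bool.not_false, if_true, one_mul]
      ring_nf
    rw [pow_succ, mul_two, sum_range_add, sum_congr rfl low, sum_congr rfl high, ih, ih,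
      AddChar.map_add_eq_mul, prod_range_succ]
    ring

theorem sum_mul_bitc_xor_sub_comm {q x y p : ℕ} (hxy : x.testBit p = y.testBit p)
    (s : Finset ℕ) (c : ℕ → ZMod q) (pos : ℕ → ℕ) :
    ∑ β ∈ s, c β * bitc q (x ^^^ 2 ^ p) (pos β) - ∑ β ∈ s, c β * bitc q x (pos β)
      = ∑ β ∈ s, c β * bitc q (y ^^^ 2 ^ p) (pos β) - ∑ β ∈ s, c β * bitc q y (pos β) := by
  simp only [← sum_sub_distrib, ← mul_sub, bitc_xor_two_pow_sub_comm hxy]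

theorem half_mul_pathSum_xor_sub {q : ℕ} (hq : Even q) {a : ℕ → ℕ} {n α x y : ℕ}
    (ha : Set.InjOn a (Set.Iic n)) (hα : α < n)
    (hagree : ∀ β ≤ α, x.testBit (a β) = y.testBit (a β))
    (hdiff : x.testBit (a (α + 1)) ≠ y.testBit (a (α + 1))) :
    ((q / 2 : ℕ) : ZMod q) *
      ((∑ β ∈ range n, bitc q (x ^^^ 2 ^ a α) (a β) * bitc q (x ^^^ 2 ^ a α) (a (β + 1))
          - ∑ β ∈ range n, bitc q x (a β) * bitc q x (a (β + 1)))
        - (∑ β ∈ range n, bitc q (y ^^^ 2 ^ a α) (a β) * bitc q (y ^^^ 2 ^ a α) (a (β + 1))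
          - ∑ β ∈ range n, bitc q y (a β) * bitc q y (a (β + 1))))
      = ((q / 2 : ℕ) : ZMod q) := by
  have hΔ := bitc_xor_two_pow_sub_comm (q := q) (hagree α le_rfl)
  have hne : ∀ β ≤ n, β ≠ α → a α ≠ a β := fun β hβ hβα h =>
    hβα (ha (Set.mem_Iic.mpr hβ) (Set.mem_Iic.mpr hα.le) h.symm)
  rw [← sum_sub_distrib, ← sum_sub_distrib, ← sum_sub_distrib, sum_eq_single α]
  · have hflip : (x ^^^ 2 ^ a α).testBit (a α) ≠ x.testBit (a α) := by simp
    rw [bitc_xor_two_pow_of_ne (hne _ hα (by omega)), bitc_xor_two_pow_of_ne (hne _ hα (by omega))]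
    calc _ = ((q / 2 : ℕ) : ZMod q)
          * (bitc q (x ^^^ 2 ^ a α) (a α) - bitc q x (a α))
          * (bitc q x (a (α + 1)) - bitc q y (a (α + 1))) := by
            linear_combination ((q / 2 : ℕ) : ZMod q) * bitc q y (a (α + 1)) * hΔ (a α)
      _ = _ := by
        rw [half_mul_eq_half hq (bitc_sub_bitc_of_testBit_ne hflip),
          half_mul_eq_half hq (bitc_sub_bitc_of_testBit_ne hdiff)]
  · intro β hβ hβα
    have hβn := mem_range.mp hβ
    rw [bitc_xor_two_pow_of_ne (hne β hβn.le hβα), bitc_xor_two_pow_of_ne (hne β hβn.le hβα)]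
    by_cases hβ1 : β + 1 = α
    · have hxβ : bitc q x (a β) = bitc q y (a β) := by
        rw [bitc, bitc, hagree β (by omega)]
      rw [← hβ1] at hΔ ⊢
      linear_combination bitc q x (a β) * hΔ (a (β + 1))
        + (bitc q (y ^^^ 2 ^ a (β + 1)) (a (β + 1)) - bitc q y (a (β + 1))) * hxβ
    · rw [bitc_xor_two_pow_of_ne (hne _ (by omega) hβ1),
        bitc_xor_two_pow_of_ne (hne _ (by omega) hβ1)]
      ring
  · exact fun h => absurd (mem_range.mpr hα) h

theorem accf_natCast (L : ℕ) (a b : ℕ → ℂ) (w : ℕ) : accf L a b w = accfN L a b w := by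
  simp [accf, accfN]

theorem accf_neg_natCast (L : ℕ) (a b : ℕ → ℂ) (w : ℕ) :
    accf L a b (-w) = starRingEnd ℂ (accfN L b a w) := by
  rcases Nat.eq_zero_or_pos w with rfl | hw
  · simp [accf, accfN, mul_comm]
  · simp [accf, accfN, hw.ne', mul_comm]

namespace ZCZSetup

variable (C : ZCZSetup)

instance : NeZero C.q := ⟨by have := C.hq; omega⟩

theorem Sseq_mul_conj (t1 t2 t1' t2' ν x y : ℕ) :
    C.Sseq t1 t2 ν x * starRingEnd ℂ (C.Sseq t1' t2' ν y)
      = ZMod.stdAddChar (C.gExp t1 t2 ν x - C.gExp t1' t2' ν y) := by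
  rw [Sseq, Sseq, omegaQ_pow_val, omegaQ_pow_val, sub_eq_add_neg, AddChar.map_add_eq_mul,
    AddChar.map_neg_eq_conj]

def diffConst (t1 t1' t2 t2' x y : ℕ) : ZMod C.q :=
  C.f x - C.f y + ((C.q / 2 : ℕ) : ZMod C.q) *
    ((∑ β ∈ range C.k, (C.bbit t1 t2 β : ZMod C.q) * bitc C.q x (C.jfull β))
      - (∑ β ∈ range C.k, (C.bbit t1' t2' β : ZMod C.q) * bitc C.q y (C.jfull β))
      + (C.bbit t1 t2 C.k : ZMod C.q) * bitc C.q x C.gamma2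
      - (C.bbit t1' t2' C.k : ZMod C.q) * bitc C.q y C.gamma2)

def diffCoeff (t1 t1' t2 t2' x y β : ℕ) : ZMod C.q :=
  if β = C.k then bitc C.q x C.gamma1 - bitc C.q y C.gamma1
  else bitc C.q x (C.jfull β) - bitc C.q y (C.jfull β)
    + if β ∈ Ico (C.k - C.s) C.k then
        (C.bbit t1 t2 (C.s + 1 + β) : ZMod C.q) - C.bbit t1' t2' (C.s + 1 + β)
      else 0

theorem gExp_sub_gExp (t1 t1' t2 t2' ν x y : ℕ) :
    C.gExp t1 t2 ν x - C.gExp t1' t2' ν y = C.diffConst t1 t1' t2 t2' x y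
      + ∑ β ∈ range (C.k + 1),
          bitc C.q ν β * (((C.q / 2 : ℕ) : ZMod C.q) * C.diffCoeff t1 t1' t2 t2' x y β) := by
  set h : ZMod C.q := ((C.q / 2 : ℕ) : ZMod C.q)
  have hterm : ∀ β ∈ range C.k, bitc C.q ν β * (h * C.diffCoeff t1 t1' t2 t2' x y β)
      = h * (bitc C.q ν β * bitc C.q x (C.jfull β) - bitc C.q ν β * bitc C.q y (C.jfull β))
        + h * if β ∈ Ico (C.k - C.s) C.k then
            bitc C.q ν β * (C.bbit t1 t2 (C.s + 1 + β) : ZMod C.q)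
              - bitc C.q ν β * (C.bbit t1' t2' (C.s + 1 + β) : ZMod C.q)
          else 0 := fun β hβ => by
    rw [diffCoeff, if_neg (mem_range.mp hβ).ne]
    split_ifs <;> ring
  have hIco : range C.k ∩ Ico (C.k - C.s) C.k = Ico (C.k - C.s) C.k :=
    inter_eq_right.mpr fun β hβ => mem_range.mpr (mem_Ico.mp hβ).2
  rw [sum_range_succ, sum_congr rfl hterm, sum_add_distrib, ← mul_sum, ← mul_sum, sum_ite_mem,
    hIco, sum_sub_distrib, sum_sub_distrib, diffCoeff, if_pos rfl, gExp, gExp, diffConst]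
  ring

noncomputable def crossSum (t1 t1' t2 t2' x y : ℕ) : ℂ :=
  ∑ ν ∈ range (2 ^ (C.k + 1)), ZMod.stdAddChar (C.gExp t1 t2 ν x - C.gExp t1' t2' ν y)

theorem crossSum_eq_mul_prod (t1 t1' t2 t2' x y : ℕ) :
    C.crossSum t1 t1' t2 t2' x y
      = ZMod.stdAddChar (C.diffConst t1 t1' t2 t2' x y) * ∏ β ∈ range (C.k + 1),
          (1 + ZMod.stdAddChar
            (((C.q / 2 : ℕ) : ZMod C.q) * C.diffCoeff t1 t1' t2 t2' x y β)) := by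
  simp only [crossSum, gExp_sub_gExp]
  exact sum_range_two_pow_addChar_bitc _ _ _ _

theorem crossSum_eq_zero_of_diffCoeff {t1 t1' t2 t2' x y β : ℕ} (hβ : β < C.k + 1)
    (hc : C.diffCoeff t1 t1' t2 t2' x y β = 1 ∨ C.diffCoeff t1 t1' t2 t2' x y β = -1) :
    C.crossSum t1 t1' t2 t2' x y = 0 := by
  rw [crossSum_eq_mul_prod]
  refine mul_eq_zero_of_right _ (prod_eq_zero (mem_range.mpr hβ) ?_)
  rw [half_mul_eq_half C.hqeven hc, stdAddChar_half C.hqeven, add_neg_cancel]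

theorem crossSum_eq_zero_of_testBit_jv_ne {t1 t1' t2 t2' x y β : ℕ} (hβ : β < C.k - C.s)
    (hne : x.testBit (C.jv β) ≠ y.testBit (C.jv β)) : C.crossSum t1 t1' t2 t2' x y = 0 := by
  refine C.crossSum_eq_zero_of_diffCoeff (β := β) (by omega) ?_
  have hsk := C.hsk
  rw [diffCoeff, if_neg (by omega), if_neg (by rw [mem_Ico]; omega), add_zero, jfull, if_pos hβ]
  exact bitc_sub_bitc_of_testBit_ne hne

theorem crossSum_eq_zero_of_testBit_gamma1_ne {t1 t1' t2 t2' x y : ℕ}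
    (hne : x.testBit C.gamma1 ≠ y.testBit C.gamma1) : C.crossSum t1 t1' t2 t2' x y = 0 := by
  refine C.crossSum_eq_zero_of_diffCoeff (β := C.k) (by omega) ?_
  rw [diffCoeff, if_pos rfl]
  exact bitc_sub_bitc_of_testBit_ne hne

theorem crossSum_self_eq_zero {t1 t1' : ℕ} (ht1 : t1 < 2 ^ C.s) (ht1' : t1' < 2 ^ C.s)
    (hne : t1 ≠ t1') (t2 t2' x : ℕ) : C.crossSum t1 t1' t2 t2' x x = 0 := by
  obtain ⟨γ, hγne⟩ := Nat.exists_testBit_ne_of_ne hne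
  have hγ : γ < C.s := by
    by_contra! hγ
    have hpow := Nat.pow_le_pow_right two_pos hγ
    rw [Nat.testBit_lt_two_pow (by omega), Nat.testBit_lt_two_pow (by omega)] at hγne
    exact hγne rfl
  have hsk := C.hsk
  refine C.crossSum_eq_zero_of_diffCoeff (β := C.k - C.s + γ) (by omega) ?_
  rw [diffCoeff, if_neg (by omega), if_pos (by rw [mem_Ico]; omega), sub_self, zero_add,
    show C.s + 1 + (C.k - C.s + γ) = C.k + 1 + γ by omega, bbit, bbit, if_neg (by omega),
    if_neg (by omega), Nat.add_sub_cancel_left, natCast_bitn, natCast_bitn]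
  exact bitc_sub_bitc_of_testBit_ne hγne

def pathVertex (β : ℕ) : ℕ := C.iv (C.perm β)

theorem pathVertex_injOn : Set.InjOn C.pathVertex (Set.Iio (C.m - C.k)) := fun _ ha _ hb hab =>
  C.hperm.injOn ha hb (C.hiv_inj _ (C.hperm.mapsTo ha) _ (C.hperm.mapsTo hb) hab)

theorem pathVertex_lt {β : ℕ} (hβ : β < C.m - C.k) : C.pathVertex β < C.m - C.s :=
  C.hiv_lt _ (C.hperm.mapsTo hβ)

theorem pathVertex_ne_jfull {α : ℕ} (hα : α < C.m - C.k) (β : ℕ) :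
    C.pathVertex α ≠ C.jfull β := by
  unfold jfull
  split_ifs with hβ
  · exact (C.hdisj β hβ _ (C.hperm.mapsTo hα)).symm
  · have := C.pathVertex_lt hα
    omega

theorem exists_pathVertex_eq {i : ℕ} (hi : i < C.m - C.s) (hJ : ∀ β < C.k - C.s, C.jv β ≠ i) :
    ∃ β < C.m - C.k, C.pathVertex β = i := by
  classical
  set J := (range (C.k - C.s)).image C.jv
  set I := (range (C.m - C.k)).image C.iv
  have hJsub : J ⊆ range (C.m - C.s) := by
    simpa [J, subset_iff] using C.hjv_lt
  have hIsub : I ⊆ range (C.m - C.s) \ J := by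
    simp only [I, J, subset_iff, mem_image, mem_range, mem_sdiff, not_exists, not_and]
    rintro _ ⟨β, hβ, rfl⟩
    exact ⟨C.hiv_lt β hβ, fun β' hβ' => C.hdisj β' hβ' β hβ⟩
  have hcard : (range (C.m - C.s) \ J).card ≤ I.card := by
    rw [card_sdiff_of_subset hJsub, card_range, card_image_of_injOn, card_image_of_injOn,
      card_range, card_range]
    · have := C.hsk; have := C.hkm; omega
    · exact fun a ha b hb => C.hiv_inj a (mem_range.mp ha) b (mem_range.mp hb)
    · exact fun a ha b hb => C.hjv_inj a (mem_range.mp ha) b (mem_range.mp hb)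
  have hiI : i ∈ I := by
    rw [eq_of_subset_of_card_le hIsub hcard]
    simp only [J, mem_sdiff, mem_range, mem_image, not_exists, not_and]
    exact ⟨hi, fun β hβ => hJ β hβ⟩
  obtain ⟨β', hβ', rfl⟩ := mem_image.mp hiI
  obtain ⟨β, hβ, rfl⟩ := C.hperm.surjOn (mem_range.mp hβ')
  exact ⟨β, hβ, rfl⟩

theorem gExp_xor_sub_gExp_xor {p x y : ℕ} (hJ : ∀ β, p ≠ C.jfull β) (hγ₂ : p ≠ C.gamma2)
    (hxy : x.testBit p = y.testBit p) (t1 t1' t2 t2' ν : ℕ) :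
    (C.gExp t1 t2 ν (x ^^^ 2 ^ p) - C.gExp t1' t2' ν (y ^^^ 2 ^ p))
      = (C.gExp t1 t2 ν x - C.gExp t1' t2' ν y)
        + ((C.f (x ^^^ 2 ^ p) - C.f x) - (C.f (y ^^^ 2 ^ p) - C.f y)) := by
  simp only [gExp, bitc_xor_two_pow_of_ne, hJ, hγ₂, ne_eq, not_false_eq_true]
  linear_combination ((C.q / 2 : ℕ) : ZMod C.q) * bitc C.q ν C.k
    * bitc_xor_two_pow_sub_comm hxy C.gamma1

theorem f_xor_sub_f_xor {α x y : ℕ} (hα : α + 1 < C.m - C.k) (hx : x < 2 ^ C.m)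
    (hy : y < 2 ^ C.m) (hJ : ∀ β < C.k - C.s, x.testBit (C.jv β) = y.testBit (C.jv β))
    (hagree : ∀ β ≤ α, x.testBit (C.pathVertex β) = y.testBit (C.pathVertex β))
    (hdiff : x.testBit (C.pathVertex (α + 1)) ≠ y.testBit (C.pathVertex (α + 1))) :
    (C.f (x ^^^ 2 ^ C.pathVertex α) - C.f x) - (C.f (y ^^^ 2 ^ C.pathVertex α) - C.f y)
      = ((C.q / 2 : ℕ) : ZMod C.q) := by
  have hp : C.pathVertex α < C.m := by
    have := C.pathVertex_lt (show α < C.m - C.k by omega); omega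
  have hpJ : ∀ β < C.k - C.s, C.pathVertex α ≠ C.jv β := fun β hβ =>
    (C.hdisj β hβ _ (C.hperm.mapsTo (show α < C.m - C.k by omega))).symm
  have hxp : x.testBit (C.pathVertex α) = y.testBit (C.pathVertex α) := hagree α le_rfl
  have hxor : ∀ z, ∀ β < C.k - C.s,
      (z ^^^ 2 ^ C.pathVertex α).testBit (C.jv β) = z.testBit (C.jv β) := fun z β hβ => by
    simp [Nat.testBit_xor, hpJ β hβ]
  have hlt : ∀ {z}, z < 2 ^ C.m → z ^^^ 2 ^ C.pathVertex α < 2 ^ C.m :=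
    fun hz => Nat.xor_lt_two_pow hz (Nat.pow_lt_pow_right one_lt_two hp)
  obtain ⟨u, v', v, hf⟩ := C.hf fun β => x.testBit (C.jv β)
  rw [hf x hx fun _ _ => rfl, hf y hy fun β hβ => (hJ β hβ).symm,
    hf _ (hlt hx) fun β hβ => hxor x β hβ,
    hf _ (hlt hy) fun β hβ => (hxor y β hβ).trans (hJ β hβ).symm]
  have hQ := half_mul_pathSum_xor_sub (q := C.q) C.hqeven (a := C.pathVertex)
    (C.pathVertex_injOn.mono fun a (ha : a ≤ _) => show a < C.m - C.k by omega)
    (show α < C.m - C.k - 1 by omega) hagree hdiff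
  have hu := sum_mul_bitc_xor_sub_comm hxp (range (C.m - C.k)) u C.iv
  have hv := sum_mul_bitc_xor_sub_comm hxp (range C.s) v' (fun β => C.m - C.s + β)
  simp only [pathVertex] at hQ hu hv ⊢
  linear_combination hQ + hu + hv

theorem crossSum_xor_pathVertex {α x y : ℕ} (hα : α + 1 < C.m - C.k) (hx : x < 2 ^ C.m)
    (hy : y < 2 ^ C.m) (hJ : ∀ β < C.k - C.s, x.testBit (C.jv β) = y.testBit (C.jv β))
    (hagree : ∀ β ≤ α, x.testBit (C.pathVertex β) = y.testBit (C.pathVertex β))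
    (hdiff : x.testBit (C.pathVertex (α + 1)) ≠ y.testBit (C.pathVertex (α + 1)))
    (t1 t1' t2 t2' : ℕ) :
    C.crossSum t1 t1' t2 t2' (x ^^^ 2 ^ C.pathVertex α) (y ^^^ 2 ^ C.pathVertex α)
      = -C.crossSum t1 t1' t2 t2' x y := by
  have hγ₂ : C.pathVertex α ≠ C.gamma2 := fun h =>
    absurd (C.pathVertex_injOn (show α < C.m - C.k by omega)
      (show C.m - C.k - 1 < C.m - C.k by omega) h) (by omega)
  simp only [crossSum, C.gExp_xor_sub_gExp_xor (C.pathVertex_ne_jfull (by omega)) hγ₂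
    (hagree α le_rfl), C.f_xor_sub_f_xor hα hx hy hJ hagree hdiff,
    stdAddChar_add_half C.hqeven, sum_neg_distrib]

def Aligned (x y : ℕ) : Prop :=
  (∀ β < C.k - C.s, x.testBit (C.jv β) = y.testBit (C.jv β))
    ∧ x.testBit C.gamma1 = y.testBit C.gamma1

theorem crossSum_eq_zero_of_not_aligned {x y : ℕ} (h : ¬ C.Aligned x y) (t1 t1' t2 t2' : ℕ) :
    C.crossSum t1 t1' t2 t2' x y = 0 := by
  simp only [Aligned, not_and_or, not_forall] at h
  rcases h with ⟨β, hβ, hne⟩ | hne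
  · exact C.crossSum_eq_zero_of_testBit_jv_ne hβ hne
  · exact C.crossSum_eq_zero_of_testBit_gamma1_ne hne

theorem aligned_xor_iff (x y p : ℕ) : C.Aligned (x ^^^ 2 ^ p) (y ^^^ 2 ^ p) ↔ C.Aligned x y := by
  simp only [Aligned, testBit_xor_two_pow_eq_iff]

/-- `sInf ∅ = 0`: when `x` and `y` agree along the path, this is `0`, and `pathFlip` then flips
the bit `γ₁`, on which aligned `x` and `y` agree. -/
noncomputable def firstPathDiff (x y : ℕ) : ℕ :=
  sInf {β | β < C.m - C.k ∧ x.testBit (C.pathVertex β) ≠ y.testBit (C.pathVertex β)}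

theorem firstPathDiff_xor (x y p : ℕ) :
    C.firstPathDiff (x ^^^ 2 ^ p) (y ^^^ 2 ^ p) = C.firstPathDiff x y := by
  simp only [firstPathDiff, ne_eq, testBit_xor_two_pow_eq_iff]

theorem firstPathDiff_lt (x y : ℕ) : C.firstPathDiff x y < C.m - C.k := by
  unfold firstPathDiff
  rcases Set.eq_empty_or_nonempty
    {β | β < C.m - C.k ∧ x.testBit (C.pathVertex β) ≠ y.testBit (C.pathVertex β)} with h | h
  · rw [h, Nat.sInf_empty]
    have := C.hkm
    omega
  · exact (Nat.sInf_mem h).1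

theorem testBit_pathVertex_of_lt_firstPathDiff {x y β : ℕ} (hβ : β < C.firstPathDiff x y) :
    x.testBit (C.pathVertex β) = y.testBit (C.pathVertex β) := by
  by_contra h
  exact Nat.notMem_of_lt_sInf hβ ⟨hβ.trans (C.firstPathDiff_lt x y), h⟩

theorem testBit_pathVertex_firstPathDiff_ne {x y : ℕ}
    (h : ∃ β, β < C.m - C.k ∧ x.testBit (C.pathVertex β) ≠ y.testBit (C.pathVertex β)) :
    x.testBit (C.pathVertex (C.firstPathDiff x y))
      ≠ y.testBit (C.pathVertex (C.firstPathDiff x y)) :=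
  (Nat.sInf_mem h).2

theorem exists_pathVertex_testBit_ne {x w : ℕ} (hw₀ : 0 < w) (hw : w < 2 ^ (C.m - C.s))
    (hal : C.Aligned x (x + w)) :
    ∃ β, β < C.m - C.k ∧ x.testBit (C.pathVertex β) ≠ (x + w).testBit (C.pathVertex β) := by
  by_contra! h
  refine hw₀.ne' (eq_zero_of_testBit_add_eq (x := x) hw fun i hi => ?_)
  by_cases hJ : ∃ β < C.k - C.s, C.jv β = i
  · obtain ⟨β, hβ, rfl⟩ := hJ
    exact (hal.1 β hβ).symm
  · push Not at hJ
    obtain ⟨β, hβ, rfl⟩ := C.exists_pathVertex_eq hi hJ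
    exact (h β hβ).symm

noncomputable def pathFlip (w x : ℕ) : ℕ :=
  x ^^^ 2 ^ C.pathVertex (C.firstPathDiff x (x + w) - 1)

theorem testBit_pathVertex_pred_firstPathDiff_eq {x y : ℕ} (hal : C.Aligned x y) :
    x.testBit (C.pathVertex (C.firstPathDiff x y - 1))
      = y.testBit (C.pathVertex (C.firstPathDiff x y - 1)) := by
  rcases Nat.eq_zero_or_pos (C.firstPathDiff x y) with h | h
  · rw [h]
    exact hal.2
  · exact C.testBit_pathVertex_of_lt_firstPathDiff (by omega)

theorem pathFlip_add {w x : ℕ} (hal : C.Aligned x (x + w)) :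
    C.pathFlip w x + w = (x + w) ^^^ 2 ^ C.pathVertex (C.firstPathDiff x (x + w) - 1) :=
  xor_two_pow_add_comm (C.testBit_pathVertex_pred_firstPathDiff_eq hal)

theorem aligned_pathFlip {w x : ℕ} (hal : C.Aligned x (x + w)) :
    C.Aligned (C.pathFlip w x) (C.pathFlip w x + w) := by
  rw [C.pathFlip_add hal, pathFlip, aligned_xor_iff]
  exact hal

theorem pathFlip_pathFlip {w x : ℕ} (hal : C.Aligned x (x + w)) :
    C.pathFlip w (C.pathFlip w x) = x := by
  conv_lhs => rw [pathFlip, C.pathFlip_add hal]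
  rw [pathFlip, firstPathDiff_xor, Nat.xor_assoc, Nat.xor_self, Nat.xor_zero]

theorem pathFlip_ne (w x : ℕ) : C.pathFlip w x ≠ x := by
  intro h
  have := congrArg (Nat.testBit · (C.pathVertex (C.firstPathDiff x (x + w) - 1))) h
  simp [pathFlip] at this

theorem pathFlip_add_lt {w x : ℕ} (hal : C.Aligned x (x + w)) (hxw : x + w < 2 ^ C.m) :
    C.pathFlip w x + w < 2 ^ C.m := by
  rw [C.pathFlip_add hal]
  refine Nat.xor_lt_two_pow hxw (Nat.pow_lt_pow_right one_lt_two ?_)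
  have := C.pathVertex_lt (lt_of_le_of_lt (Nat.sub_le _ 1) (C.firstPathDiff_lt x (x + w)))
  omega

theorem crossSum_pathFlip {w x : ℕ} (hw₀ : 0 < w) (hw : w < 2 ^ (C.m - C.s))
    (hal : C.Aligned x (x + w)) (hxw : x + w < 2 ^ C.m) (t1 t1' t2 t2' : ℕ) :
    C.crossSum t1 t1' t2 t2' (C.pathFlip w x) (C.pathFlip w x + w)
      = -C.crossSum t1 t1' t2 t2' x (x + w) := by
  have hex := C.exists_pathVertex_testBit_ne hw₀ hw hal
  have hdiff := C.testBit_pathVertex_firstPathDiff_ne hex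
  have hpos : 0 < C.firstPathDiff x (x + w) := Nat.pos_of_ne_zero fun h0 => by
    rw [h0] at hdiff
    exact hdiff hal.2
  have hsucc : C.firstPathDiff x (x + w) - 1 + 1 = C.firstPathDiff x (x + w) := by omega
  rw [C.pathFlip_add hal, pathFlip]
  refine C.crossSum_xor_pathVertex (by rw [hsucc]; exact C.firstPathDiff_lt _ _) (by omega) hxw
    hal.1 (fun β hβ => C.testBit_pathVertex_of_lt_firstPathDiff (by omega)) (by rwa [hsucc])
    t1 t1' t2 t2'

theorem sum_crossSum_eq_zero {t1 t1' : ℕ} (ht1 : t1 < 2 ^ C.s) (ht1' : t1' < 2 ^ C.s)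
    (hne : t1 ≠ t1') (t2 t2' : ℕ) {w : ℕ} (hw : w < 2 ^ (C.m - C.s)) :
    ∑ x ∈ range (2 ^ C.m - w), C.crossSum t1 t1' t2 t2' x (x + w) = 0 := by
  classical
  rcases Nat.eq_zero_or_pos w with rfl | hw₀
  · exact sum_eq_zero fun x _ => C.crossSum_self_eq_zero ht1 ht1' hne t2 t2' x
  have hwm : w < 2 ^ C.m := hw.trans_le (Nat.pow_le_pow_right two_pos (Nat.sub_le _ _))
  rw [← sum_filter_add_sum_filter_not _ fun x => C.Aligned x (x + w),
    sum_eq_zero fun x hx =>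
      C.crossSum_eq_zero_of_not_aligned (mem_filter.mp hx).2 t1 t1' t2 t2', add_zero]
  have hmem : ∀ {x}, x ∈ (range (2 ^ C.m - w)).filter (fun x => C.Aligned x (x + w)) →
      C.Aligned x (x + w) ∧ x + w < 2 ^ C.m := fun hx => by
    rw [mem_filter, mem_range] at hx
    exact ⟨hx.2, by omega⟩
  refine sum_involution (fun x _ => C.pathFlip w x) (fun x hx => ?_)
    (fun x _ _ => C.pathFlip_ne w x) (fun x hx => ?_) (fun x hx => C.pathFlip_pathFlip (hmem hx).1)
  · rw [C.crossSum_pathFlip hw₀ hw (hmem hx).1 (hmem hx).2, add_neg_cancel]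
  · have := C.pathFlip_add_lt (hmem hx).1 (hmem hx).2
    exact mem_filter.mpr ⟨mem_range.mpr (by omega), C.aligned_pathFlip (hmem hx).1⟩

theorem sum_accfN_eq_zero {t1 t1' : ℕ} (ht1 : t1 < 2 ^ C.s) (ht1' : t1' < 2 ^ C.s)
    (hne : t1 ≠ t1') (t2 t2' : ℕ) {w : ℕ} (hw : w < 2 ^ (C.m - C.s)) :
    ∑ ν ∈ range (2 ^ (C.k + 1)), accfN (2 ^ C.m) (C.Sseq t1 t2 ν) (C.Sseq t1' t2' ν) w = 0 := by
  simp only [accfN, Sseq_mul_conj]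
  rw [sum_comm]
  exact C.sum_crossSum_eq_zero ht1 ht1' hne t2 t2' hw

end ZCZSetup

theorem lemma2_second_part_general (C : ZCZSetup) (t1 t1' : ℕ)
    (ht1 : t1 < 2 ^ C.s) (ht1' : t1' < 2 ^ C.s) (hne : t1 ≠ t1')
    (t2 t2' : ℕ)
    (u : ℤ) (hu : u.natAbs < 2 ^ (C.m - C.s)) :
    (∑ ν ∈ Finset.range (2 ^ (C.k + 1)),
        accf (2 ^ C.m) (C.Sseq t1 t2 ν) (C.Sseq t1' t2' ν) u) = 0 := by
  obtain ⟨w, rfl | rfl⟩ := Int.eq_nat_or_neg u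
  · simp only [accf_natCast]
    exact C.sum_accfN_eq_zero ht1 ht1' hne t2 t2' (by simpa using hu)
  · simp only [accf_neg_natCast, ← map_sum]
    rw [C.sum_accfN_eq_zero ht1' ht1 hne.symm t2' t2 (by simpa using hu), map_zero]

/-- **Lemma 2, second part.** Any two Golay complementary sets belonging to different
CCCs of the family have a zero cross-correlation zone of width `2^{m−s}`: for all
`0 ≤ t_1 ≠ t_1' ≤ 2^s − 1`, all `0 ≤ t_2, t_2' ≤ 2^{k+1} − 1` and all shifts
`|u| < 2^{m−s}`, the row-wise ACCF sum vanishes. -/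
theorem lemma2_second_part (C : ZCZSetup) (t1 t1' : ℕ)
    (ht1 : t1 < 2 ^ C.s) (ht1' : t1' < 2 ^ C.s) (hne : t1 ≠ t1')
    (t2 t2' : ℕ) (ht2 : t2 < 2 ^ (C.k + 1)) (ht2' : t2' < 2 ^ (C.k + 1))
    (u : ℤ) (hu : u.natAbs < 2 ^ (C.m - C.s)) :
    (∑ ν ∈ Finset.range (2 ^ (C.k + 1)),
        accf (2 ^ C.m) (C.Sseq t1 t2 ν) (C.Sseq t1' t2' ν) u) = 0 :=
  lemma2_second_part_general C t1 t1' ht1 ht1' hne t2 t2' u hu
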